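/- (Strict comparison) Under the comparison theorem hypotheses with strict inequality in assumption (iii) unless e_i^* Z^1_t ∼_{M_{t+1}} e_i^* Z^2_t: if Y^1_t = Y^2_t a.s. on some A ∈ F_t, then on A a.s.: Q^1 = Q^2, and for all s in {t,...,T}: F^1(ω,s,Y^2_s,Z^2_s) = F^2(ω,s,Y^2_s,Z^2_s), Z^1_s ∼_{M_{s+1}} Z^2_s, and Y^1_s = Y^2_s. -/

import Mathlib

/-!
Let `Γ_s = (Y¹_s - F¹(Y¹_s, Z¹_s)) - (Y²_s - F¹(Y²_s, Z¹_s))` and `d = Z¹_s - Z²_s`.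
The one-step recursions of the two BSDEs give
`Γ_s = (Y¹_{s+1} - Y²_{s+1}) + (F¹ - F²)(Y²_s, Z²_s)`
`      + (F¹(Y²_s, Z¹_s) - F¹(Y²_s, Z²_s)) - d M_{s+1}`,
where the first two terms are nonnegative and the third is at least `Jmin`. Since `X_{s+1}` is a
basis vector, `d M_{s+1} = Jmin` whenever the chain jumps to a state of positive conditional
probability minimising `d`, and on every non-null `𝓕_s`-set this happens with positive
probability. As `Γ_s` is `𝓕_s`-measurable, this forces `Γ_s ≥ 0`, and (iv) gives `Y² ≤ Y¹`.
If `Y¹_s = Y²_s` on `A`, then `Γ_s = 0` there, which the strict form of (iii) rules out unless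
`Z¹_s M_{s+1} = Z²_s M_{s+1}`; then the two nonnegative terms vanish on `A`, so
`Y¹_{s+1} = Y²_{s+1}` on `A`, and the argument moves forward in time.
-/

open MeasureTheory

/-- `Jmin p d` is `min_{j ∈ J} (e_j - p)·d = min_{j : p j > 0} (d j - ⟨d, p⟩)`, the minimum
over the indices `j` of positive conditional probability of
`e_i^*(Z¹-Z²)(e_j - E[X_{t+1}|𝓕 t])` with `d` the relevant row of `Z¹ - Z²` and
`p = E[X_{t+1}|𝓕 t]`. -/
noncomputable def Jmin {N : ℕ} (p d : Fin N → ℝ) : ℝ :=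
  sInf {a : ℝ | ∃ j, 0 < p j ∧ a = d j - ∑ l, d l * p l}

theorem Jmin_eq_of_forall_le {N : ℕ} {p d : Fin N → ℝ} {j : Fin N} (hj : 0 < p j)
    (hmin : ∀ l, 0 < p l → d j ≤ d l) : Jmin p d = d j - ∑ l, d l * p l :=
  IsLeast.csInf_eq ⟨⟨j, hj, rfl⟩, by rintro _ ⟨l, hl, rfl⟩; linarith [hmin l hl]⟩

section CondExp

variable {Ω ι : Type*} [Fintype ι] {m m0 : MeasurableSpace Ω} {μ : Measure Ω} [IsFiniteMeasure μ]
  {X : Ω → ι → ℝ}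

theorem setIntegral_condExp_apply (hm : m ≤ m0) (hX : Integrable X μ) (j : ι) {E : Set Ω}
    (hE : MeasurableSet[m] E) : ∫ ω in E, μ[X|m] ω j ∂μ = ∫ ω in E, X ω j ∂μ := by
  have h := congrFun (setIntegral_condExp hm hX hE) j
  rwa [eval_integral integrable_condExp.restrict.eval, eval_integral hX.restrict.eval] at h

theorem measure_eq_zero_of_condExp_apply_pos (hm : m ≤ m0) (hX : Integrable X μ) {j : ι}
    {E : Set Ω} (hE : MeasurableSet[m] E) (hpos : ∀ ω ∈ E, 0 < μ[X|m] ω j)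
    (hzero : ∀ᵐ ω ∂μ, ω ∈ E → X ω j = 0) : μ E = 0 := by
  by_contra hE0
  have hint : 0 < ∫ ω in E, μ[X|m] ω j ∂μ := by
    refine (setIntegral_pos_iff_support_of_nonneg_ae ?_ ?_).2 ?_
    · exact (ae_restrict_iff' (hm E hE)).2 (ae_of_all _ fun ω hω => (hpos ω hω).le)
    · exact (integrable_condExp.eval j).integrableOn
    · rwa [Set.inter_eq_right.2 fun ω hω => Function.mem_support.2 (hpos ω hω).ne',
        pos_iff_ne_zero]
  rw [setIntegral_condExp_apply hm hX j hE, setIntegral_eq_zero_of_ae_eq_zero hzero] at hint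
  exact hint.false

theorem measure_forall_condExp_apply_nonpos_eq_zero (hm : m ≤ m0) (hX : Integrable X μ)
    (hsum : ∀ᵐ ω ∂μ, ∑ j, X ω j = 1) : μ {ω | ∀ j, μ[X|m] ω j ≤ 0} = 0 := by
  set E := {ω | ∀ j, μ[X|m] ω j ≤ 0}
  have hp : ∀ j, Measurable[m] fun ω => μ[X|m] ω j :=
    fun j => (measurable_pi_apply j).comp stronglyMeasurable_condExp.measurable
  have hE : MeasurableSet[m] E := by
    simp only [E, Set.ofPred_forall]
    exact MeasurableSet.iInter fun j => measurableSet_le (hp j) measurable_const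
  have : μ.real E ≤ 0 := calc
    μ.real E = ∫ ω in E, ∑ j, X ω j ∂μ := by
      rw [setIntegral_congr_ae (hm E hE) (hsum.mono fun ω h _ => h)]; simp
    _ = ∑ j, ∫ ω in E, μ[X|m] ω j ∂μ := by
      rw [integral_finsetSum _ fun j _ => (hX.eval j).integrableOn]
      exact Finset.sum_congr rfl fun j _ => (setIntegral_condExp_apply hm hX j hE).symm
    _ ≤ 0 := Finset.sum_nonpos fun j _ => setIntegral_nonpos (hm E hE) fun ω hω => hω j
  exact (measureReal_eq_zero_iff (measure_ne_top μ E)).1 (le_antisymm this measureReal_nonneg)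

end CondExp

section UnitVectors

variable {Ω : Type*} {N : ℕ} {m m0 : MeasurableSpace Ω} {μ : Measure Ω} [IsFiniteMeasure μ]
  {X M : Ω → Fin N → ℝ}

theorem measure_eq_zero_of_ae_Jmin_lt (hm : m ≤ m0)
    (hX : ∀ ω, ∃ i, X ω = fun j => if j = i then 1 else 0) (hXint : Integrable X μ)
    (hM : M = X - μ[X|m]) {d : Ω → Fin N → ℝ} (hd : Measurable[m] d) {C : Set Ω}
    (hC : MeasurableSet[m] C)
    (hlt : ∀ᵐ ω ∂μ, ω ∈ C → Jmin (μ[X|m] ω) (d ω) < ∑ j, d ω j * M ω j) :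
    μ C = 0 := by
  set p := μ[X|m]
  have hp : ∀ j, Measurable[m] fun ω => p ω j :=
    fun j => (measurable_pi_apply j).comp stronglyMeasurable_condExp.measurable
  have hdj : ∀ j, Measurable[m] fun ω => d ω j := fun j => (measurable_pi_apply j).comp hd
  let Cmin j := C ∩ {ω | 0 < p ω j} ∩ ⋂ l, {ω | 0 < p ω l → d ω j ≤ d ω l}
  have hpos : ∀ j, MeasurableSet[m] {ω | 0 < p ω j} :=
    fun j => measurableSet_lt measurable_const (hp j)
  have hCmin_meas : ∀ j, MeasurableSet[m] (Cmin j) := fun j =>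
    (hC.inter (hpos j)).inter <| MeasurableSet.iInter fun l =>
      ((hpos l).compl.union (measurableSet_le (hdj j) (hdj l))).congr
        (by ext; simp [imp_iff_not_or])
  have hCmin_null : ∀ j, μ (Cmin j) = 0 := by
    refine fun j => measure_eq_zero_of_condExp_apply_pos hm hXint (hCmin_meas j)
      (fun ω hω => hω.1.2) ?_
    filter_upwards [hlt] with ω hω hωC
    obtain ⟨i, hi⟩ := hX ω
    -- if the chain jumps to the minimising state `j`, then `d ⬝ M = Jmin`
    have hJ : Jmin (p ω) (d ω) = d ω j - ∑ l, d ω l * p ω l :=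
      Jmin_eq_of_forall_le hωC.1.2 fun l hl => Set.mem_iInter.1 hωC.2 l hl
    have hdM : ∑ l, d ω l * M ω l = d ω i - ∑ l, d ω l * p ω l := by
      simp [hM, hi, p, mul_sub, Finset.sum_sub_distrib]
    rw [hi]
    refine if_neg fun hji => ?_
    subst hji
    exact (hω hωC.1.1).ne (hJ.trans hdM.symm)
  have hcover : C ⊆ {ω | ∀ j, p ω j ≤ 0} ∪ ⋃ j, Cmin j := by
    intro ω hω
    by_cases h : ∀ j, p ω j ≤ 0
    · exact Or.inl h
    push Not at h
    obtain ⟨j0, hj0⟩ := h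
    obtain ⟨j, hj, hmin⟩ := Finset.exists_min_image (Finset.univ.filter (0 < p ω ·)) (d ω)
      ⟨j0, by simpa using hj0⟩
    exact Or.inr (Set.mem_iUnion.2 ⟨j, ⟨hω, by simpa using hj⟩,
      Set.mem_iInter.2 fun l hl => hmin l (by simpa using hl)⟩)
  have hsum : ∀ᵐ ω ∂μ, ∑ j, X ω j = 1 := ae_of_all _ fun ω => by
    obtain ⟨i, hi⟩ := hX ω
    simp [hi]
  exact measure_mono_null hcover <| measure_union_null
    (measure_forall_condExp_apply_nonpos_eq_zero hm hXint hsum) (measure_iUnion_null hCmin_null)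

theorem ae_nonneg_of_ae_Jmin_sub_le (hm : m ≤ m0)
    (hX : ∀ ω, ∃ i, X ω = fun j => if j = i then 1 else 0) (hXint : Integrable X μ)
    (hM : M = X - μ[X|m]) {d : Ω → Fin N → ℝ} (hd : Measurable[m] d) {G : Ω → ℝ}
    (hG : Measurable[m] G) (hle : ∀ᵐ ω ∂μ, Jmin (μ[X|m] ω) (d ω) - ∑ j, d ω j * M ω j ≤ G ω) :
    ∀ᵐ ω ∂μ, 0 ≤ G ω := by
  have hneg : μ {ω | G ω < 0} = 0 :=
    measure_eq_zero_of_ae_Jmin_lt hm hX hXint hM hd (measurableSet_lt hG measurable_const)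
      (hle.mono fun ω h hω => by linarith [hω.out])
  filter_upwards [measure_eq_zero_iff_ae_notMem.1 hneg] with ω h using not_lt.1 h

end UnitVectors

section BSDE

variable {Ω : Type*} {m0 : MeasurableSpace Ω} {N K T : ℕ}

def IsBSDESolution (μ : Measure Ω) (T : ℕ) (M : ℕ → Ω → Fin N → ℝ)
    (F : Ω → ℕ → (Fin K → ℝ) → (Fin K → Fin N → ℝ) → Fin K → ℝ) (Q : Ω → Fin K → ℝ)
    (Y : ℕ → Ω → Fin K → ℝ) (Z : ℕ → Ω → Fin K → Fin N → ℝ) : Prop :=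
  ∀ t ≤ T, ∀ᵐ ω ∂μ, Y t ω - ∑ u ∈ Finset.Ico t T, F ω u (Y u ω) (Z u ω)
    + ∑ u ∈ Finset.Ico t T, (fun i => ∑ j, Z u ω i j * M (u + 1) ω j) = Q ω

variable {μ : Measure Ω} {M : ℕ → Ω → Fin N → ℝ}
  {F F1 F2 : Ω → ℕ → (Fin K → ℝ) → (Fin K → Fin N → ℝ) → Fin K → ℝ}
  {Q Q1 Q2 : Ω → Fin K → ℝ} {Y Y1 Y2 : ℕ → Ω → Fin K → ℝ} {Z Z1 Z2 : ℕ → Ω → Fin K → Fin N → ℝ}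

namespace IsBSDESolution

theorem terminal (h : IsBSDESolution μ T M F Q Y Z) : ∀ᵐ ω ∂μ, Y T ω = Q ω := by
  filter_upwards [h T le_rfl] with ω h using by simpa using h

theorem step (h : IsBSDESolution μ T M F Q Y Z) {s : ℕ} (hs : s < T) :
    ∀ᵐ ω ∂μ, ∀ i, Y s ω i
      = Y (s + 1) ω i + F ω s (Y s ω) (Z s ω) i - ∑ j, Z s ω i j * M (s + 1) ω j := by
  filter_upwards [h s hs.le, h (s + 1) hs] with ω h0 h1 i
  rw [Finset.sum_eq_sum_Ico_succ_bot hs, Finset.sum_eq_sum_Ico_succ_bot hs] at h0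
  have h0i := congrFun h0 i
  have h1i := congrFun h1 i
  simp only [Pi.add_apply, Pi.sub_apply, Finset.sum_apply] at h0i h1i
  linarith

end IsBSDESolution

theorem measurable_row_sub {m : MeasurableSpace Ω} {Z1 Z2 : Ω → Fin K → Fin N → ℝ}
    (hZ1 : StronglyMeasurable[m] Z1) (hZ2 : StronglyMeasurable[m] Z2) (i : Fin K) :
    Measurable[m] fun ω j => Z1 ω i j - Z2 ω i j :=
  ((measurable_pi_apply i).comp hZ1.measurable).sub ((measurable_pi_apply i).comp hZ2.measurable)

variable [IsFiniteMeasure μ] {𝓕 : Filtration ℕ m0} {X : ℕ → Ω → Fin N → ℝ}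

theorem comparison_theorem (hX : ∀ t ω, ∃ i, X t ω = fun j => if j = i then 1 else 0)
    (hXint : ∀ t, Integrable (X t) μ) (hM : ∀ t, M (t + 1) = X (t + 1) - μ[X (t + 1) | 𝓕 t])
    (hF1 : ∀ t < T, ∀ (Y : Ω → Fin K → ℝ) (Z : Ω → Fin K → Fin N → ℝ),
      StronglyMeasurable[𝓕 t] Y → StronglyMeasurable[𝓕 t] Z →
      StronglyMeasurable[𝓕 t] (fun ω => F1 ω t (Y ω) (Z ω)))
    (hY1 : ∀ t, StronglyMeasurable[𝓕 t] (Y1 t)) (hZ1 : ∀ t, StronglyMeasurable[𝓕 t] (Z1 t))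
    (hY2 : ∀ t, StronglyMeasurable[𝓕 t] (Y2 t)) (hZ2 : ∀ t, StronglyMeasurable[𝓕 t] (Z2 t))
    (hsol1 : IsBSDESolution μ T M F1 Q1 Y1 Z1) (hsol2 : IsBSDESolution μ T M F2 Q2 Y2 Z2)
    (hQ : ∀ᵐ ω ∂μ, ∀ i, Q2 ω i ≤ Q1 ω i)
    (hii : ∀ t < T, ∀ᵐ ω ∂μ, ∀ i,
      F2 ω t (Y2 t ω) (Z2 t ω) i ≤ F1 ω t (Y2 t ω) (Z2 t ω) i)
    (hiii : ∀ t < T, ∀ᵐ ω ∂μ, ∀ i,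
      Jmin ((μ[X (t + 1) | 𝓕 t]) ω) (fun j => Z1 t ω i j - Z2 t ω i j)
        ≤ F1 ω t (Y2 t ω) (Z1 t ω) i - F1 ω t (Y2 t ω) (Z2 t ω) i)
    (hiv : ∀ t < T, ∀ᵐ ω ∂μ,
      (∀ i, Y2 t ω i - F1 ω t (Y2 t ω) (Z1 t ω) i
          ≤ Y1 t ω i - F1 ω t (Y1 t ω) (Z1 t ω) i) →
      ∀ i, Y2 t ω i ≤ Y1 t ω i) :
    ∀ s ≤ T, ∀ᵐ ω ∂μ, ∀ i, Y2 s ω i ≤ Y1 s ω i := by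
  intro s hs
  induction hs using Nat.decreasingInduction with
  | self => filter_upwards [hsol1.terminal, hsol2.terminal, hQ] with ω h1 h2 hQ; rwa [h1, h2]
  | of_succ s hs ih =>
    have hΓ_meas : StronglyMeasurable[𝓕 s] fun ω =>
        (Y1 s ω - F1 ω s (Y1 s ω) (Z1 s ω)) - (Y2 s ω - F1 ω s (Y2 s ω) (Z1 s ω)) :=
      ((hY1 s).sub (hF1 s hs _ _ (hY1 s) (hZ1 s))).sub
        ((hY2 s).sub (hF1 s hs _ _ (hY2 s) (hZ1 s)))
    have hΓ : ∀ i, ∀ᵐ ω ∂μ, 0 ≤ (Y1 s ω i - F1 ω s (Y1 s ω) (Z1 s ω) i)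
        - (Y2 s ω i - F1 ω s (Y2 s ω) (Z1 s ω) i) := fun i =>
      ae_nonneg_of_ae_Jmin_sub_le (𝓕.le s) (hX (s + 1)) (hXint (s + 1)) (hM s)
        (measurable_row_sub (hZ1 s) (hZ2 s) i)
        ((measurable_pi_apply i).comp hΓ_meas.measurable) <| by
        filter_upwards [hsol1.step hs, hsol2.step hs, ih, hii s hs, hiii s hs]
          with ω h1 h2 h3 h4 h5
        simp only [sub_mul, Finset.sum_sub_distrib]
        linarith [h1 i, h2 i, h3 i, h4 i, h5 i]
    filter_upwards [ae_all_iff.2 hΓ, hiv s hs] with ω hΓ hiv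
    exact hiv fun i => by linarith [hΓ i]

section Step

variable {s : ℕ} (hX : ∀ ω, ∃ i, X (s + 1) ω = fun j => if j = i then 1 else 0)
  (hXint : Integrable (X (s + 1)) μ) (hM : M (s + 1) = X (s + 1) - μ[X (s + 1) | 𝓕 s])
  (hZ1 : StronglyMeasurable[𝓕 s] (Z1 s)) (hZ2 : StronglyMeasurable[𝓕 s] (Z2 s))
  (hsol1 : IsBSDESolution μ T M F1 Q1 Y1 Z1) (hsol2 : IsBSDESolution μ T M F2 Q2 Y2 Z2)
  (hii : ∀ᵐ ω ∂μ, ∀ i, F2 ω s (Y2 s ω) (Z2 s ω) i ≤ F1 ω s (Y2 s ω) (Z2 s ω) i)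
  (hs : s < T) {A : Set Ω} (hYs : ∀ᵐ ω ∂μ, ω ∈ A → Y1 s ω = Y2 s ω)
  (hnext : ∀ᵐ ω ∂μ, ∀ i, Y2 (s + 1) ω i ≤ Y1 (s + 1) ω i)
  (hstrict : ∀ i : Fin K,
    ¬ ((fun ω => ∑ j, Z1 s ω i j * M (s + 1) ω j)
        =ᵐ[μ] fun ω => ∑ j, Z2 s ω i j * M (s + 1) ω j) →
    ∀ᵐ ω ∂μ,
      Jmin ((μ[X (s + 1) | 𝓕 s]) ω) (fun j => Z1 s ω i j - Z2 s ω i j)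
        < F1 ω s (Y2 s ω) (Z1 s ω) i - F1 ω s (Y2 s ω) (Z2 s ω) i)
  (hA : MeasurableSet[𝓕 s] A)
include hX hXint hM hZ1 hZ2 hsol1 hsol2 hii hs hYs hnext hstrict hA

theorem incr_ae_eq_of_strict (hA0 : μ A ≠ 0) :
    ∀ᵐ ω ∂μ, (fun i => ∑ j, Z1 s ω i j * M (s + 1) ω j)
      = fun i => ∑ j, Z2 s ω i j * M (s + 1) ω j := by
  refine (ae_all_iff.2 fun i => ?_).mono fun ω h => funext h
  by_contra hne
  refine hA0 (measure_eq_zero_of_ae_Jmin_lt (𝓕.le s) hX hXint hM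
    (measurable_row_sub hZ1 hZ2 i) hA ?_)
  filter_upwards [hsol1.step hs, hsol2.step hs, hYs, hnext, hii, hstrict i hne]
    with ω h1 h2 hY h3 h4 h5 hωA
  rw [hY hωA] at h1
  simp only [sub_mul, Finset.sum_sub_distrib]
  linarith [h1 i, h2 i, h3 i, h4 i]

theorem strict_comparison_step
    (hF1 : ∀ (Y : Ω → Fin K → ℝ) (Za Zb : Ω → Fin K → Fin N → ℝ),
      (∀ᵐ ω ∂μ, (fun i => ∑ j, Za ω i j * M (s + 1) ω j)
          = (fun i => ∑ j, Zb ω i j * M (s + 1) ω j)) →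
      ∀ᵐ ω ∂μ, F1 ω s (Y ω) (Za ω) = F1 ω s (Y ω) (Zb ω)) :
    (∀ᵐ ω ∂μ, ω ∈ A → F1 ω s (Y2 s ω) (Z2 s ω) = F2 ω s (Y2 s ω) (Z2 s ω)) ∧
    (∀ᵐ ω ∂μ, ω ∈ A → (fun i => ∑ j, Z1 s ω i j * M (s + 1) ω j)
      = fun i => ∑ j, Z2 s ω i j * M (s + 1) ω j) ∧
    (∀ᵐ ω ∂μ, ω ∈ A → Y1 (s + 1) ω = Y2 (s + 1) ω) := by
  by_cases hA0 : μ A = 0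
  · have hnA : ∀ᵐ ω ∂μ, ω ∉ A := measure_eq_zero_iff_ae_notMem.1 hA0
    refine ⟨?_, ?_, ?_⟩ <;> filter_upwards [hnA] with ω h h' using absurd h' h
  have hincr :=
    incr_ae_eq_of_strict hX hXint hM hZ1 hZ2 hsol1 hsol2 hii hs hYs hnext hstrict hA hA0
  have hsplit : ∀ᵐ ω ∂μ, ω ∈ A → ∀ i, F1 ω s (Y2 s ω) (Z2 s ω) i = F2 ω s (Y2 s ω) (Z2 s ω) i
      ∧ Y1 (s + 1) ω i = Y2 (s + 1) ω i := by
    filter_upwards [hsol1.step hs, hsol2.step hs, hYs, hnext, hii, hincr,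
      hF1 (Y2 s) (Z1 s) (Z2 s) hincr] with ω h1 h2 hY h3 h4 h5 h6 hωA i
    rw [hY hωA, h6] at h1
    have h5i := congrFun h5 i
    constructor <;> linarith [h1 i, h2 i, h3 i, h4 i]
  exact ⟨hsplit.mono fun ω h hω => funext fun i => (h hω i).1, hincr.mono fun ω h _ => h,
    hsplit.mono fun ω h hω => funext fun i => (h hω i).2⟩

end Step

end BSDE

theorem strict_comparison_theorem_general
    {Ω : Type*} {m0 : MeasurableSpace Ω} {μ : Measure Ω} [IsProbabilityMeasure μ]
    {N K T : ℕ} (𝓕 : Filtration ℕ m0)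
    (X : ℕ → Ω → (Fin N → ℝ))
    (hXval : ∀ t ω, ∃ i : Fin N, X t ω = fun j => if j = i then (1 : ℝ) else 0)
    (hXint : ∀ t, Integrable (X t) μ)
    (M : ℕ → Ω → (Fin N → ℝ))
    (hM : ∀ t, M t = X t - μ[X t | 𝓕 (t - 1)])
    (F1 F2 : Ω → ℕ → (Fin K → ℝ) → (Fin K → Fin N → ℝ) → (Fin K → ℝ))
    -- both drivers satisfy the conditions of the existence theorem
    (hFmeas : ∀ F' ∈ [F1, F2], ∀ t < T, ∀ (Y : Ω → Fin K → ℝ) (Z : Ω → Fin K → Fin N → ℝ),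
      StronglyMeasurable[𝓕 t] Y → StronglyMeasurable[𝓕 t] Z →
      StronglyMeasurable[𝓕 t] (fun ω => F' ω t (Y ω) (Z ω)))
    (hFinv : ∀ F' ∈ [F1, F2], ∀ t < T,
      ∀ (Y : Ω → Fin K → ℝ) (Za Zb : Ω → Fin K → Fin N → ℝ),
      (∀ᵐ ω ∂μ, (fun i => ∑ j, Za ω i j * M (t + 1) ω j)
          = (fun i => ∑ j, Zb ω i j * M (t + 1) ω j)) →
      ∀ᵐ ω ∂μ, F' ω t (Y ω) (Za ω) = F' ω t (Y ω) (Zb ω))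
    -- the two solutions
    (Q1 Q2 : Ω → Fin K → ℝ)
    (Y1 Y2 : ℕ → Ω → Fin K → ℝ) (Z1 Z2 : ℕ → Ω → Fin K → Fin N → ℝ)
    (hY1 : ∀ t, StronglyMeasurable[𝓕 t] (Y1 t)) (hZ1 : ∀ t, StronglyMeasurable[𝓕 t] (Z1 t))
    (hY2 : ∀ t, StronglyMeasurable[𝓕 t] (Y2 t)) (hZ2 : ∀ t, StronglyMeasurable[𝓕 t] (Z2 t))
    (hsol1 : ∀ t ≤ T, ∀ᵐ ω ∂μ,
      Y1 t ω - ∑ u ∈ Finset.Ico t T, F1 ω u (Y1 u ω) (Z1 u ω)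
        + ∑ u ∈ Finset.Ico t T, (fun i => ∑ j, Z1 u ω i j * M (u + 1) ω j) = Q1 ω)
    (hsol2 : ∀ t ≤ T, ∀ᵐ ω ∂μ,
      Y2 t ω - ∑ u ∈ Finset.Ico t T, F2 ω u (Y2 u ω) (Z2 u ω)
        + ∑ u ∈ Finset.Ico t T, (fun i => ∑ j, Z2 u ω i j * M (u + 1) ω j) = Q2 ω)
    -- (i) Q¹ ≥ Q² a.s.
    (hQ : ∀ᵐ ω ∂μ, ∀ i, Q2 ω i ≤ Q1 ω i)
    -- (ii) F¹(ω,t,Y²,Z²) ≥ F²(ω,t,Y²,Z²) a.s.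
    (hii : ∀ t < T, ∀ᵐ ω ∂μ, ∀ i,
      F2 ω t (Y2 t ω) (Z2 t ω) i ≤ F1 ω t (Y2 t ω) (Z2 t ω) i)
    -- (iii)
    (hiii : ∀ t < T, ∀ᵐ ω ∂μ, ∀ i,
      Jmin ((μ[X (t + 1) | 𝓕 t]) ω) (fun j => Z1 t ω i j - Z2 t ω i j)
        ≤ F1 ω t (Y2 t ω) (Z1 t ω) i - F1 ω t (Y2 t ω) (Z2 t ω) i)
    -- (iv)
    (hiv : ∀ t < T, ∀ᵐ ω ∂μ,
      (∀ i, Y2 t ω i - F1 ω t (Y2 t ω) (Z1 t ω) i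
          ≤ Y1 t ω i - F1 ω t (Y1 t ω) (Z1 t ω) i) →
      ∀ i, Y2 t ω i ≤ Y1 t ω i)
    -- strictness: the inequality in (iii) is strict unless e_i^* Z¹_t ∼_{M_{t+1}} e_i^* Z²_t
    (hstrict : ∀ t < T, ∀ i : Fin K,
      ¬ ((fun ω => ∑ j, Z1 t ω i j * M (t + 1) ω j)
          =ᵐ[μ] fun ω => ∑ j, Z2 t ω i j * M (t + 1) ω j) →
      ∀ᵐ ω ∂μ,
        Jmin ((μ[X (t + 1) | 𝓕 t]) ω) (fun j => Z1 t ω i j - Z2 t ω i j)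
          < F1 ω t (Y2 t ω) (Z1 t ω) i - F1 ω t (Y2 t ω) (Z2 t ω) i)
    (t : ℕ) (htT : t ≤ T)
    (A : Set Ω) (hA : MeasurableSet[𝓕 t] A)
    (hYeq : ∀ᵐ ω ∂μ, ω ∈ A → Y1 t ω = Y2 t ω) :
    (∀ᵐ ω ∂μ, ω ∈ A → Q1 ω = Q2 ω) ∧
    (∀ s, t ≤ s → s ≤ T →
      (∀ᵐ ω ∂μ, ω ∈ A → Y1 s ω = Y2 s ω) ∧
      (s < T →
        (∀ᵐ ω ∂μ, ω ∈ A → F1 ω s (Y2 s ω) (Z2 s ω) = F2 ω s (Y2 s ω) (Z2 s ω)) ∧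
        (∀ᵐ ω ∂μ, ω ∈ A →
          (fun i => ∑ j, Z1 s ω i j * M (s + 1) ω j)
            = (fun i => ∑ j, Z2 s ω i j * M (s + 1) ω j)))) := by
  have hM' : ∀ s, M (s + 1) = X (s + 1) - μ[X (s + 1) | 𝓕 s] :=
    fun s => by simpa using hM (s + 1)
  have hcomp := comparison_theorem hXval hXint hM' (hFmeas F1 (by simp)) hY1 hZ1 hY2 hZ2
    hsol1 hsol2 hQ hii hiii hiv
  have hstep := fun s (hts : t ≤ s) (hs : s < T) (hYs : ∀ᵐ ω ∂μ, ω ∈ A → Y1 s ω = Y2 s ω) =>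
    strict_comparison_step (hXval (s + 1)) (hXint (s + 1)) (hM' s) (hZ1 s) (hZ2 s) hsol1 hsol2
      (hii s hs) hs hYs (hcomp (s + 1) hs) (hstrict s hs) (𝓕.mono hts A hA)
      (hFinv F1 (by simp) s hs)
  have hY : ∀ s, t ≤ s → s ≤ T → ∀ᵐ ω ∂μ, ω ∈ A → Y1 s ω = Y2 s ω := by
    intro s hts
    induction s, hts using Nat.le_induction with
    | base => exact fun _ => hYeq
    | succ s hts ih => exact fun hs => (hstep s hts hs (ih (Nat.le_of_succ_le hs))).2.2
  refine ⟨?_, fun s hts hsT =>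
    ⟨hY s hts hsT, fun hs => (hstep s hts hs (hY s hts hsT)).imp_right And.left⟩⟩
  filter_upwards [hY T htT le_rfl, IsBSDESolution.terminal hsol1, IsBSDESolution.terminal hsol2]
    with ω h h1 h2 hωA
  rw [← h1, ← h2, h hωA]

/-- strict comparison for discrete BSDEs. -/
theorem strict_comparison_theorem
    {Ω : Type*} {m0 : MeasurableSpace Ω} {μ : Measure Ω} [IsProbabilityMeasure μ]
    {N K T : ℕ} (𝓕 : Filtration ℕ m0)
    (X : ℕ → Ω → (Fin N → ℝ))
    (hXval : ∀ t ω, ∃ i : Fin N, X t ω = fun j => if j = i then (1 : ℝ) else 0)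
    (h𝓕 : ∀ t, (𝓕 t : MeasurableSpace Ω)
      = MeasurableSpace.comap (fun ω (s : Fin (t + 1)) => X (s : ℕ) ω) inferInstance)
    (hXint : ∀ t, Integrable (X t) μ)
    (M : ℕ → Ω → (Fin N → ℝ))
    (hM : ∀ t, M t = X t - μ[X t | 𝓕 (t - 1)])
    (F1 F2 : Ω → ℕ → (Fin K → ℝ) → (Fin K → Fin N → ℝ) → (Fin K → ℝ))
    -- both drivers satisfy the conditions of the existence theorem
    (hFmeas : ∀ F' ∈ [F1, F2], ∀ t < T, ∀ (Y : Ω → Fin K → ℝ) (Z : Ω → Fin K → Fin N → ℝ),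
      StronglyMeasurable[𝓕 t] Y → StronglyMeasurable[𝓕 t] Z →
      StronglyMeasurable[𝓕 t] (fun ω => F' ω t (Y ω) (Z ω)))
    (hFinv : ∀ F' ∈ [F1, F2], ∀ t < T,
      ∀ (Y : Ω → Fin K → ℝ) (Za Zb : Ω → Fin K → Fin N → ℝ),
      (∀ᵐ ω ∂μ, (fun i => ∑ j, Za ω i j * M (t + 1) ω j)
          = (fun i => ∑ j, Zb ω i j * M (t + 1) ω j)) →
      ∀ᵐ ω ∂μ, F' ω t (Y ω) (Za ω) = F' ω t (Y ω) (Zb ω))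
    (hFbij : ∀ F' ∈ [F1, F2], ∀ t < T, ∀ Z : Ω → Fin K → Fin N → ℝ,
      ∀ᵐ ω ∂μ, Function.Bijective (fun y : Fin K → ℝ => y - F' ω t y (Z ω)))
    -- the two solutions
    (Q1 Q2 : Ω → Fin K → ℝ)
    (hQ1meas : StronglyMeasurable[𝓕 T] Q1) (hQ2meas : StronglyMeasurable[𝓕 T] Q2)
    (Y1 Y2 : ℕ → Ω → Fin K → ℝ) (Z1 Z2 : ℕ → Ω → Fin K → Fin N → ℝ)
    (hY1 : ∀ t, StronglyMeasurable[𝓕 t] (Y1 t)) (hZ1 : ∀ t, StronglyMeasurable[𝓕 t] (Z1 t))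
    (hY2 : ∀ t, StronglyMeasurable[𝓕 t] (Y2 t)) (hZ2 : ∀ t, StronglyMeasurable[𝓕 t] (Z2 t))
    (hsol1 : ∀ t ≤ T, ∀ᵐ ω ∂μ,
      Y1 t ω - ∑ u ∈ Finset.Ico t T, F1 ω u (Y1 u ω) (Z1 u ω)
        + ∑ u ∈ Finset.Ico t T, (fun i => ∑ j, Z1 u ω i j * M (u + 1) ω j) = Q1 ω)
    (hsol2 : ∀ t ≤ T, ∀ᵐ ω ∂μ,
      Y2 t ω - ∑ u ∈ Finset.Ico t T, F2 ω u (Y2 u ω) (Z2 u ω)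
        + ∑ u ∈ Finset.Ico t T, (fun i => ∑ j, Z2 u ω i j * M (u + 1) ω j) = Q2 ω)
    -- (i) Q¹ ≥ Q² a.s.
    (hQ : ∀ᵐ ω ∂μ, ∀ i, Q2 ω i ≤ Q1 ω i)
    -- (ii) F¹(ω,t,Y²,Z²) ≥ F²(ω,t,Y²,Z²) a.s.
    (hii : ∀ t < T, ∀ᵐ ω ∂μ, ∀ i,
      F2 ω t (Y2 t ω) (Z2 t ω) i ≤ F1 ω t (Y2 t ω) (Z2 t ω) i)
    -- (iii)
    (hiii : ∀ t < T, ∀ᵐ ω ∂μ, ∀ i,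
      Jmin ((μ[X (t + 1) | 𝓕 t]) ω) (fun j => Z1 t ω i j - Z2 t ω i j)
        ≤ F1 ω t (Y2 t ω) (Z1 t ω) i - F1 ω t (Y2 t ω) (Z2 t ω) i)
    -- (iv)
    (hiv : ∀ t < T, ∀ᵐ ω ∂μ,
      (∀ i, Y2 t ω i - F1 ω t (Y2 t ω) (Z1 t ω) i
          ≤ Y1 t ω i - F1 ω t (Y1 t ω) (Z1 t ω) i) →
      ∀ i, Y2 t ω i ≤ Y1 t ω i)
    -- strictness: the inequality in (iii) is strict unless e_i^* Z¹_t ∼_{M_{t+1}} e_i^* Z²_t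
    (hstrict : ∀ t < T, ∀ i : Fin K,
      ¬ ((fun ω => ∑ j, Z1 t ω i j * M (t + 1) ω j)
          =ᵐ[μ] fun ω => ∑ j, Z2 t ω i j * M (t + 1) ω j) →
      ∀ᵐ ω ∂μ,
        Jmin ((μ[X (t + 1) | 𝓕 t]) ω) (fun j => Z1 t ω i j - Z2 t ω i j)
          < F1 ω t (Y2 t ω) (Z1 t ω) i - F1 ω t (Y2 t ω) (Z2 t ω) i)
    (t : ℕ) (htT : t ≤ T)
    (A : Set Ω) (hA : MeasurableSet[𝓕 t] A)
    (hYeq : ∀ᵐ ω ∂μ, ω ∈ A → Y1 t ω = Y2 t ω) :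
    (∀ᵐ ω ∂μ, ω ∈ A → Q1 ω = Q2 ω) ∧
    (∀ s, t ≤ s → s ≤ T →
      (∀ᵐ ω ∂μ, ω ∈ A → Y1 s ω = Y2 s ω) ∧
      (s < T →
        (∀ᵐ ω ∂μ, ω ∈ A → F1 ω s (Y2 s ω) (Z2 s ω) = F2 ω s (Y2 s ω) (Z2 s ω)) ∧
        (∀ᵐ ω ∂μ, ω ∈ A →
          (fun i => ∑ j, Z1 s ω i j * M (s + 1) ω j)
            = (fun i => ∑ j, Z2 s ω i j * M (s + 1) ω j)))) :=
  strict_comparison_theorem_general 𝓕 X hXval hXint M hM F1 F2 hFmeas hFinv Q1 Q2 Y1 Y2 Z1 Z2 hY1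
    hZ1 hY2 hZ2 hsol1 hsol2 hQ hii hiii hiv hstrict t htT A hA hYeq
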